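/- arXiv:2503.16933 — 2 statements merged into one kernel-verified Lean document; each statement's English description precedes it below -/
import Mathlib

section
/- Let T be a 2-isometry on a complex Hilbert space H and let H₀ := ⋂_{n≥0} Tⁿ(H). Then H₀ is a closed subspace of H that reduces T (i.e. T(H₀) ⊆ H₀ and T*(H₀) ⊆ H₀), and the restriction of T to H₀ is unitary: T maps H₀ isometrically onto H₀. -/
/-! With `Δ z = ‖T z‖² - ‖z‖²`, the 2-isometry identity reads `Δ (T z) = Δ z`, so
`‖Tⁿ z‖² = ‖z‖² + n Δ z`. Since the left side is nonnegative for every `n`, `Δ ≥ 0`: `T` and all its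
powers are expansive, hence have closed ranges, and `T` is injective, so `T` maps `H₀` onto `H₀`.
If `x = Tⁿ zₙ` for every `n`, then `n Δ x = n Δ zₙ ≤ ‖x‖²` for all `n`, so `Δ x = 0`.
Finally `T* T - 1` is a positive operator whose quadratic form `Δ` vanishes on `H₀`, so `T* T = 1`
on `H₀`, and `T* x = y ∈ H₀` whenever `x = T y` with `y ∈ H₀`. -/

open ContinuousLinearMap

theorem nonpos_of_forall_nat_mul_le {α : Type*} [Field α] [LinearOrder α] [IsStrictOrderedRing α]
    [Archimedean α] {d a : α} (h : ∀ n : ℕ, n * d ≤ a) : d ≤ 0 := by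
  by_contra! hd
  obtain ⟨n, hn⟩ := exists_nat_gt (a / d)
  rw [div_lt_iff₀ hd] at hn
  exact (h n).not_gt hn

namespace LinearMap

variable {R M : Type*} [Semiring R] [AddCommMonoid M] [Module R M] (f : M →ₗ[R] M)

theorem map_iInf_range_pow_le :
    (⨅ n : ℕ, range (f ^ n)).map f ≤ ⨅ n : ℕ, range (f ^ n) := by
  rintro _ ⟨x, hx, rfl⟩
  refine Submodule.mem_iInf _ |>.mpr fun n => ?_
  obtain ⟨y, rfl⟩ := Submodule.mem_iInf _ |>.mp hx n
  exact ⟨f y, by rw [← Module.End.mul_apply, ← pow_succ, pow_succ', Module.End.mul_apply]⟩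

theorem map_iInf_range_pow_of_injective (hf : Function.Injective f) :
    (⨅ n : ℕ, range (f ^ n)).map f = ⨅ n : ℕ, range (f ^ n) := by
  refine (map_iInf_range_pow_le f).antisymm fun x hx => ?_
  have hx' := Submodule.mem_iInf _ |>.mp hx
  obtain ⟨y, rfl⟩ := pow_one f ▸ hx' 1
  refine ⟨y, Submodule.mem_iInf _ |>.mpr fun n => ?_, rfl⟩
  obtain ⟨z, hz⟩ := hx' (n + 1)
  exact ⟨z, hf <| by rwa [← Module.End.mul_apply, ← pow_succ']⟩

end LinearMap

section TwoIsometry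

variable {𝕜 E : Type*} [NormedField 𝕜]

def IsTwoIsometry [SeminormedAddCommGroup E] [NormedSpace 𝕜 E] (T : E →L[𝕜] E) : Prop :=
  ∀ h : E, ‖T (T h)‖ ^ 2 - 2 * ‖T h‖ ^ 2 + ‖h‖ ^ 2 = 0

namespace IsTwoIsometry

section Seminormed

variable [SeminormedAddCommGroup E] [NormedSpace 𝕜 E] {T : E →L[𝕜] E}

theorem norm_pow_apply_sq (hT : IsTwoIsometry T) (n : ℕ) (z : E) :
    ‖(T ^ n) z‖ ^ 2 = ‖z‖ ^ 2 + n * (‖T z‖ ^ 2 - ‖z‖ ^ 2) := by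
  induction n generalizing z with
  | zero => simp
  | succ n ih =>
    rw [pow_succ T n, mul_apply_eq_comp, ih]
    push_cast
    linear_combination (n : ℝ) * hT z

theorem norm_le_norm_apply (hT : IsTwoIsometry T) (z : E) : ‖z‖ ≤ ‖T z‖ := by
  have h : ‖z‖ ^ 2 - ‖T z‖ ^ 2 ≤ 0 := nonpos_of_forall_nat_mul_le (a := ‖z‖ ^ 2) fun n => by
    nlinarith [hT.norm_pow_apply_sq n z, sq_nonneg ‖(T ^ n) z‖]
  exact (sq_le_sq₀ (norm_nonneg _) (norm_nonneg _)).mp (by linarith)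

theorem norm_le_norm_pow_apply (hT : IsTwoIsometry T) (n : ℕ) (z : E) : ‖z‖ ≤ ‖(T ^ n) z‖ := by
  have hΔ : ‖z‖ ^ 2 ≤ ‖T z‖ ^ 2 := pow_le_pow_left₀ (norm_nonneg z) (hT.norm_le_norm_apply z) 2
  refine (sq_le_sq₀ (norm_nonneg _) (norm_nonneg _)).mp ?_
  rw [hT.norm_pow_apply_sq]
  exact le_add_of_nonneg_right (mul_nonneg n.cast_nonneg (sub_nonneg.mpr hΔ))

theorem norm_apply_eq_of_mem_iInf_range_pow (hT : IsTwoIsometry T) {x : E}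
    (hx : x ∈ ⨅ n : ℕ, LinearMap.range ((T : E →ₗ[𝕜] E) ^ n)) : ‖T x‖ = ‖x‖ := by
  have bounded : ∀ n : ℕ, n * (‖T x‖ ^ 2 - ‖x‖ ^ 2) ≤ ‖x‖ ^ 2 := fun n => by
    obtain ⟨z, rfl⟩ := Submodule.mem_iInf _ |>.mp hx n
    rw [← toLinearMap_pow, coe_coe, ← mul_apply_eq_comp, ← pow_succ', hT.norm_pow_apply_sq,
      hT.norm_pow_apply_sq]
    push_cast
    nlinarith [sq_nonneg ‖z‖]
  have h := nonpos_of_forall_nat_mul_le bounded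
  exact le_antisymm ((sq_le_sq₀ (norm_nonneg _) (norm_nonneg _)).mp (by linarith))
    (hT.norm_le_norm_apply x)

end Seminormed

section Normed

variable [NormedAddCommGroup E] [NormedSpace 𝕜 E] {T : E →L[𝕜] E}

theorem antilipschitz_pow (hT : IsTwoIsometry T) (n : ℕ) : AntilipschitzWith 1 (T ^ n) :=
  (T ^ n).antilipschitz_of_bound fun z => by simpa using hT.norm_le_norm_pow_apply n z

theorem injective (hT : IsTwoIsometry T) : Function.Injective T := by
  simpa using (hT.antilipschitz_pow 1).injective

theorem isClosed_iInf_range_pow [CompleteSpace E] (hT : IsTwoIsometry T) :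
    IsClosed ((⨅ n : ℕ, LinearMap.range ((T : E →ₗ[𝕜] E) ^ n) : Submodule 𝕜 E) : Set E) := by
  rw [Submodule.coe_iInf]
  refine isClosed_iInter fun n => ?_
  rw [← toLinearMap_pow, LinearMap.coe_range, coe_coe]
  exact (hT.antilipschitz_pow n).isClosed_range (T ^ n).uniformContinuous

end Normed

end IsTwoIsometry

end TwoIsometry

namespace ContinuousLinearMap

theorem one_le_adjoint_mul_self {𝕜 E : Type*} [RCLike 𝕜] [NormedAddCommGroup E]
    [InnerProductSpace 𝕜 E] [CompleteSpace E] {T : E →L[𝕜] E}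
    (hT : ∀ z, ‖z‖ ≤ ‖T z‖) : 1 ≤ adjoint T * T := by
  rw [le_def, isPositive_def]
  refine ⟨(isPositive_adjoint_comp_self T).isSymmetric.sub isPositive_one.isSymmetric, fun z => ?_⟩
  rw [reApplyInnerSelf_apply, sub_apply, one_apply_eq_self, inner_sub_left, map_sub,
    mul_apply_eq_comp, adjoint_inner_left, inner_self_eq_norm_sq, inner_self_eq_norm_sq, sub_nonneg]
  exact pow_le_pow_left₀ (norm_nonneg z) (hT z) 2

variable {H : Type*} [NormedAddCommGroup H] [InnerProductSpace ℂ H] [CompleteSpace H]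

theorem IsPositive.apply_eq_zero_of_inner_self_eq_zero {A : H →L[ℂ] H} (hA : A.IsPositive)
    {x : H} (hx : inner ℂ (A x) x = 0) : A x = 0 := by
  obtain ⟨B, rfl⟩ := CStarAlgebra.nonneg_iff_eq_star_mul_self.mp ((nonneg_iff_isPositive A).mpr hA)
  rw [star_eq_adjoint, mul_apply_eq_comp, adjoint_inner_left, inner_self_eq_zero] at hx
  rw [mul_apply_eq_comp, hx, map_zero]

theorem adjoint_apply_apply_eq_of_norm_apply_eq {T : H →L[ℂ] H} (hT : ∀ z, ‖z‖ ≤ ‖T z‖) {y : H}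
    (hy : ‖T y‖ = ‖y‖) : adjoint T (T y) = y := by
  have hpos : (adjoint T * T - 1).IsPositive := (le_def _ _).mp (one_le_adjoint_mul_self hT)
  have hdefect : inner ℂ ((adjoint T * T - 1) y) y = 0 := by
    rw [sub_apply, one_apply_eq_self, inner_sub_left, mul_apply_eq_comp, adjoint_inner_left,
      inner_self_eq_norm_sq_to_K, inner_self_eq_norm_sq_to_K, hy, sub_self]
  have h := hpos.apply_eq_zero_of_inner_self_eq_zero hdefect
  rwa [sub_apply, one_apply_eq_self, mul_apply_eq_comp, sub_eq_zero] at h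

end ContinuousLinearMap

/-- For a 2-isometry `T`, the subspace `H₀ = ⋂ₙ Tⁿ(H)` is closed,
reduces `T`, and `T` restricted to `H₀` is unitary (an isometric bijection of `H₀`). -/
theorem twoIsometry_intersection_ranges_reducing_unitary
    {H : Type*} [NormedAddCommGroup H] [InnerProductSpace ℂ H] [CompleteSpace H]
    (T : H →L[ℂ] H)
    (h2iso : ∀ h : H, ‖T (T h)‖ ^ 2 - 2 * ‖T h‖ ^ 2 + ‖h‖ ^ 2 = 0) :
    ∀ H₀ : Submodule ℂ H, H₀ = (⨅ n : ℕ, LinearMap.range ((T ^ n : H →L[ℂ] H) : H →ₗ[ℂ] H)) →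
      IsClosed (H₀ : Set H) ∧
      (∀ x ∈ H₀, T x ∈ H₀) ∧
      (∀ x ∈ H₀, adjoint T x ∈ H₀) ∧
      (∀ x ∈ H₀, ‖T x‖ = ‖x‖) ∧
      H₀.map (T : H →ₗ[ℂ] H) = H₀ := by
  intro H₀ hH₀
  have hT : IsTwoIsometry T := h2iso
  simp only [toLinearMap_pow] at hH₀
  subst hH₀
  have hmap := LinearMap.map_iInf_range_pow_of_injective _ hT.injective
  refine ⟨hT.isClosed_iInf_range_pow, fun x hx => hmap ▸ Submodule.mem_map_of_mem hx,
    fun x hx => ?_, fun x hx => hT.norm_apply_eq_of_mem_iInf_range_pow hx, hmap⟩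
  obtain ⟨y, hy, rfl⟩ := hmap.ge hx
  rwa [coe_coe, adjoint_apply_apply_eq_of_norm_apply_eq hT.norm_le_norm_apply
    (hT.norm_apply_eq_of_mem_iInf_range_pow hy)]
end

section
/- Let (T₁, T₂) be a pair of doubly commuting analytic 2-isometries on a nonzero complex Hilbert space H. Then the joint kernel ker T₁* ∩ ker T₂* is a nontrivial subspace of H, i.e. ker T₁* ∩ ker T₂* ≠ {0}. -/
/-!
A 2-isometry `T` is expansive, since `n ↦ ‖Tⁿx‖²` is a nonnegative arithmetic progression;
hence `T` is bounded below and maps closed subspaces onto closed subspaces. If `S ≠ 0` is a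
closed subspace invariant under `T` and `T*`, analyticity forces `T S ⊊ S`, and any nonzero
`x ∈ S ⊖ T S` lies in `ker T*`, because `‖T* x‖² = ⟪T T* x, x⟫` with `T T* x ∈ T S`.
Applied first to `T₂` on `S = H` this shows `ker T₂* ≠ 0`; double commutativity makes
`ker T₂*` invariant under `T₁` and `T₁*`, and a second application, to `T₁`, gives the theorem.
-/

open ContinuousLinearMap

theorem apply_zero_le_apply_one_of_nonneg_of_second_diff_eq_zero {g : ℕ → ℝ}
    (hrec : ∀ n, g (n + 2) - 2 * g (n + 1) + g n = 0) (hnonneg : ∀ n, 0 ≤ g n) : g 0 ≤ g 1 := by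
  have hlin : ∀ n : ℕ, g n = g 0 + n * (g 1 - g 0) := by
    intro n
    induction n using Nat.twoStepInduction with
    | zero => simp
    | one => simp
    | more n ih₀ ih₁ =>
      push_cast at ih₁ ⊢
      linarith [hrec n]
  by_contra! hlt
  obtain ⟨n, hn⟩ := exists_nat_gt (g 0 / (g 0 - g 1))
  rw [div_lt_iff₀ (by linarith)] at hn
  nlinarith [hlin n, hnonneg n]

theorem Submodule.orthogonal_inf_ne_bot_of_lt {𝕜 E : Type*} [RCLike 𝕜] [NormedAddCommGroup E]
    [InnerProductSpace 𝕜 E] {F S : Submodule 𝕜 E} [F.HasOrthogonalProjection] (h : F < S) :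
    Fᗮ ⊓ S ≠ ⊥ := by
  intro hbot
  have hsup := sup_orthogonal_inf_of_hasOrthogonalProjection h.le
  rw [hbot, sup_bot_eq] at hsup
  exact h.ne hsup

namespace ContinuousLinearMap

section Basic

variable {R M : Type*} [Semiring R] [TopologicalSpace M] [AddCommMonoid M] [Module R M]

def IsAnalytic (T : M →L[R] M) : Prop :=
  ⨅ n : ℕ, LinearMap.range ((T ^ n : M →L[R] M) : M →ₗ[R] M) = ⊥

theorem IsAnalytic.map_ne_self {T : M →L[R] M} (hT : T.IsAnalytic) {S : Submodule R M}
    (hS : S ≠ ⊥) : S.map (T : M →ₗ[R] M) ≠ S := by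
  intro hfix
  have hpow : ∀ n : ℕ, S.map ((T ^ n : M →L[R] M) : M →ₗ[R] M) = S := by
    intro n
    induction n with
    | zero => exact Submodule.map_id S
    | succ n ih => rw [toLinearMap_pow, pow_succ, Module.End.mul_eq_comp, Submodule.map_comp,
        hfix, ← toLinearMap_pow, ih]
  refine hS (eq_bot_iff.mpr ?_)
  rw [← hT]
  exact le_iInf fun n => (hpow n).symm.le.trans LinearMap.map_le_range

theorem map_ker_le_ker_of_comp_eq {A B : M →L[R] M} (h : A ∘L B = B ∘L A) :
    (LinearMap.ker (B : M →ₗ[R] M)).map (A : M →ₗ[R] M) ≤ LinearMap.ker (B : M →ₗ[R] M) := by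
  rintro _ ⟨x, hx, rfl⟩
  have hBx : B x = 0 := hx
  change B (A x) = 0
  rw [← comp_apply, ← h, comp_apply, hBx, map_zero]

end Basic

section TwoIsometry

variable {R E : Type*} [Semiring R] [SeminormedAddCommGroup E] [Module R E]

def IsTwoIsometry (T : E →L[R] E) : Prop :=
  ∀ x : E, ‖T (T x)‖ ^ 2 - 2 * ‖T x‖ ^ 2 + ‖x‖ ^ 2 = 0

theorem IsTwoIsometry.norm_le_norm_apply {T : E →L[R] E} (hT : T.IsTwoIsometry) (x : E) :
    ‖x‖ ≤ ‖T x‖ := by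
  have hsq := apply_zero_le_apply_one_of_nonneg_of_second_diff_eq_zero
    (g := fun n => ‖T^[n] x‖ ^ 2)
    (fun n => by simpa only [Function.iterate_succ_apply'] using hT (T^[n] x))
    (fun n => sq_nonneg _)
  simp only [Function.iterate_zero_apply, Function.iterate_one] at hsq
  exact (sq_le_sq₀ (norm_nonneg _) (norm_nonneg _)).mp hsq

theorem IsTwoIsometry.antilipschitz {T : E →L[R] E} (hT : T.IsTwoIsometry) :
    AntilipschitzWith 1 T :=
  AddMonoidHomClass.antilipschitz_of_bound T (by simpa using hT.norm_le_norm_apply)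

end TwoIsometry

section InnerProductSpace

variable {𝕜 E : Type*} [RCLike 𝕜] [NormedAddCommGroup E] [InnerProductSpace 𝕜 E] [CompleteSpace E]

theorem orthogonal_map_inf_le_ker_adjoint (T : E →L[𝕜] E) {S : Submodule 𝕜 E}
    (hS : S.map (adjoint T : E →ₗ[𝕜] E) ≤ S) :
    (S.map (T : E →ₗ[𝕜] E))ᗮ ⊓ S ≤ LinearMap.ker (adjoint T : E →ₗ[𝕜] E) := by
  rintro x ⟨hxF, hxS⟩
  have hmem : T (adjoint T x) ∈ S.map (T : E →ₗ[𝕜] E) := ⟨adjoint T x, hS ⟨x, hxS, rfl⟩, rfl⟩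
  rw [LinearMap.mem_ker, coe_coe, ← inner_self_eq_zero (𝕜 := 𝕜), adjoint_inner_right]
  exact (Submodule.mem_orthogonal _ x).mp hxF _ hmem

theorem ker_adjoint_inf_ne_bot_of_isAnalytic {T : E →L[𝕜] E} {K : NNReal}
    (hT : AntilipschitzWith K T) (hana : T.IsAnalytic) {S : Submodule 𝕜 E}
    (hSclosed : IsClosed (S : Set E)) (hS : S ≠ ⊥) (hTS : S.map (T : E →ₗ[𝕜] E) ≤ S)
    (hTadjS : S.map (adjoint T : E →ₗ[𝕜] E) ≤ S) :
    LinearMap.ker (adjoint T : E →ₗ[𝕜] E) ⊓ S ≠ ⊥ := by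
  have hclosed : IsClosed (S.map (T : E →ₗ[𝕜] E) : Set E) :=
    (hT.isClosedEmbedding T.uniformContinuous).isClosedMap _ hSclosed
  have : CompleteSpace (S.map (T : E →ₗ[𝕜] E)) := hclosed.completeSpace_coe
  have hlt : S.map (T : E →ₗ[𝕜] E) < S := lt_of_le_of_ne hTS (hana.map_ne_self hS)
  exact ne_bot_of_le_ne_bot (Submodule.orthogonal_inf_ne_bot_of_lt hlt)
    (le_inf (orthogonal_map_inf_le_ker_adjoint T hTadjS) inf_le_right)

end InnerProductSpace

end ContinuousLinearMap

/-- For a doubly commuting pair of analytic 2-isometries on a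
nonzero complex Hilbert space, the joint kernel `ker T₁* ∩ ker T₂*` is nontrivial. -/
theorem doublyCommuting_analytic_twoIsometries_joint_kernel_nontrivial
    {H : Type*} [NormedAddCommGroup H] [InnerProductSpace ℂ H] [CompleteSpace H]
    [Nontrivial H]
    (T₁ T₂ : H →L[ℂ] H)
    (h2iso₁ : ∀ h : H, ‖T₁ (T₁ h)‖ ^ 2 - 2 * ‖T₁ h‖ ^ 2 + ‖h‖ ^ 2 = 0)
    (h2iso₂ : ∀ h : H, ‖T₂ (T₂ h)‖ ^ 2 - 2 * ‖T₂ h‖ ^ 2 + ‖h‖ ^ 2 = 0)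
    (hana₁ : (⨅ n : ℕ, LinearMap.range ((T₁ ^ n : H →L[ℂ] H) : H →ₗ[ℂ] H)) = ⊥)
    (hana₂ : (⨅ n : ℕ, LinearMap.range ((T₂ ^ n : H →L[ℂ] H) : H →ₗ[ℂ] H)) = ⊥)
    (hcomm : T₁ ∘L T₂ = T₂ ∘L T₁)
    (hdcomm : T₁ ∘L adjoint T₂ = adjoint T₂ ∘L T₁) :
    LinearMap.ker (adjoint T₁ : H →ₗ[ℂ] H) ⊓ LinearMap.ker (adjoint T₂ : H →ₗ[ℂ] H) ≠ ⊥ := by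
  have hker₂ : LinearMap.ker (adjoint T₂ : H →ₗ[ℂ] H) ≠ ⊥ := by
    simpa only [inf_top_eq] using ker_adjoint_inf_ne_bot_of_isAnalytic (IsTwoIsometry.antilipschitz h2iso₂) hana₂
      (S := ⊤) isClosed_univ top_ne_bot le_top le_top
  have hadj : adjoint T₁ ∘L adjoint T₂ = adjoint T₂ ∘L adjoint T₁ := by
    simpa only [adjoint_comp] using congr(adjoint $hcomm).symm
  exact ker_adjoint_inf_ne_bot_of_isAnalytic (IsTwoIsometry.antilipschitz h2iso₁) hana₁
    (adjoint T₂).isClosed_ker hker₂ (map_ker_le_ker_of_comp_eq hdcomm)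
    (map_ker_le_ker_of_comp_eq hadj)
end
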